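/- arXiv:1503.03102 — 5 statements merged into one kernel-verified Lean document; each statement's English description precedes it below -/
import Mathlib

section
/- Let S be a finite set of cardinality r ≥ 5 and let k = ⌈ log(C(r,4)) / log(32/29) ⌉, where C(r,4) is the binomial coefficient. Then there exist partitions p_1, ..., p_k of S such that every quadruple of distinct elements a, b, c, d of S is separated by at least one of p_1, ..., p_k. -/
/-!
A uniformly random map `S → Fin 4` is injective on a fixed 4-set with probability
`4! / 4⁴ = 3/32`, so `k` independent ones all fail on it with probability `(29/32)^k`.
The choice of `k` gives `C(r,4) · (29/32)^k ≤ 1`, with equality impossible because `29 ∤ 32^k`;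
so by the union bound (i.e. by counting `k`-tuples) some `k`-tuple of maps is injective on
every 4-set.
-/

/-- A partition of `S` is a map `S → Fin 4`; it separates a quadruple of distinct
elements `a b c d` if the four values are pairwise distinct. -/
def Separates {S : Type*} (p : S → Fin 4) (a b c d : S) : Prop :=
  p a ≠ p b ∧ p a ≠ p c ∧ p a ≠ p d ∧ p b ≠ p c ∧ p b ≠ p d ∧ p c ≠ p d

open Finset

theorem natCard_injOn {α β : Type*} [Fintype α] [Fintype β] (T : Finset α) :
    Nat.card {f : α → β // Set.InjOn f T} =
      (Fintype.card β).descFactorial #T * Fintype.card β ^ (Fintype.card α - #T) := by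
  classical
  let e : {f : α → β // Set.InjOn f T} ≃ (T ↪ β) × ({x // x ∉ T} → β) :=
    ((Equiv.piEquivPiSubtypeProd (· ∈ T) fun _ => β).subtypeEquiv
        (p := fun f => Set.InjOn f T) (q := fun g => Function.Injective g.1)
        fun f => Set.injOn_iff_injective).trans
      (Equiv.prodSubtypeFstEquivSubtypeProd.trans
        (Equiv.prodCongr (Equiv.subtypeInjectiveEquivEmbedding _ _) (Equiv.refl _)))
  rw [Nat.card_congr e, Nat.card_eq_fintype_card, Fintype.card_prod, Fintype.card_embedding_eq,
    Fintype.card_fun, Fintype.card_subtype_compl, Fintype.card_coe]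

theorem natCard_not_injOn_fin_four {α : Type*} [Fintype α] {T : Finset α}
    (hT : #T = 4) :
    32 * Nat.card {f : α → Fin 4 // ¬ Set.InjOn f T} = 29 * 4 ^ Fintype.card α := by
  classical
  obtain ⟨m, hm⟩ : ∃ m, Fintype.card α = m + 4 := ⟨Fintype.card α - 4, by
    have := hT ▸ T.card_le_univ; omega⟩
  have hinj := natCard_injOn (β := Fin 4) T
  rw [Nat.card_eq_fintype_card] at hinj
  rw [Nat.card_eq_fintype_card, Fintype.card_subtype_compl, hinj, Fintype.card_fun,
    Fintype.card_fin, hT, hm, Nat.add_sub_cancel, pow_add]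
  simp only [Nat.descFactorial, Nat.reducePow]
  omega

theorem exists_forall_exists_not_of_card_mul_pow_lt {ι X κ : Type*} [Fintype X] [Nonempty X]
    [Fintype κ] (I : Finset ι) (P : ι → X → Prop) (p q : ℕ)
    (hP : ∀ i ∈ I, q * Nat.card {x // P i x} ≤ p * Fintype.card X)
    (h : #I * p ^ Fintype.card κ < q ^ Fintype.card κ) :
    ∃ f : κ → X, ∀ i ∈ I, ∃ j, ¬ P i (f j) := by
  classical
  set n := Fintype.card κ
  let bad : Finset (κ → X) := I.biUnion fun i => Fintype.piFinset fun _ => {x | P i x}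
  have hbad : q ^ n * #bad < q ^ n * #(univ : Finset (κ → X)) := calc
    q ^ n * #bad ≤ q ^ n * ∑ i ∈ I, #{x | P i x} ^ n := by
      gcongr
      refine card_biUnion_le.trans_eq (sum_congr rfl fun i _ => ?_)
      simp [n]
    _ = ∑ i ∈ I, (q * Nat.card {x // P i x}) ^ n := by
      simp only [mul_sum, mul_pow, Nat.card_eq_fintype_card, Fintype.card_subtype]
    _ ≤ ∑ i ∈ I, (p * Fintype.card X) ^ n :=
      sum_le_sum fun i hi => Nat.pow_le_pow_left (hP i hi) n
    _ = #I * p ^ n * Fintype.card X ^ n := by rw [sum_const, smul_eq_mul, mul_pow, mul_assoc]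
    _ < q ^ n * #(univ : Finset (κ → X)) := by
      rw [card_univ, Fintype.card_fun]
      exact Nat.mul_lt_mul_of_pos_right h (by positivity)
  obtain ⟨f, -, hf⟩ := exists_mem_notMem_of_card_lt_card (Nat.lt_of_mul_lt_mul_left hbad)
  simp only [bad, mem_biUnion, Fintype.mem_piFinset, mem_filter_univ, not_exists, not_and] at hf
  exact ⟨f, fun i hi => not_forall.mp (hf i hi)⟩

theorem le_pow_natCeil_log_div_log {x b : ℝ} (hx : 0 < x) (hb : 1 < b) :
    x ≤ b ^ ⌈Real.log x / Real.log b⌉₊ := by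
  rw [Real.log_div_log, ← Real.rpow_natCast]
  exact (Real.logb_le_iff_le_rpow hb hx).mp (Nat.le_ceil _)

theorem mul_pow_lt_pow_natCeil_log_div_log {n a b : ℕ} (hn : 1 < n) (ha : 1 < a) (hab : a < b)
    (hcop : a.Coprime b) :
    n * a ^ ⌈Real.log n / Real.log (b / a)⌉₊ < b ^ ⌈Real.log n / Real.log (b / a)⌉₊ := by
  set k := ⌈Real.log n / Real.log (b / a)⌉₊
  have hba : (1 : ℝ) < b / a := by
    rw [one_lt_div (by positivity)]; exact_mod_cast hab
  have hk : 0 < k := Nat.ceil_pos.mpr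
    (div_pos (Real.log_pos (by exact_mod_cast hn)) (Real.log_pos hba))
  have hle : n * a ^ k ≤ b ^ k := by
    have := le_pow_natCeil_log_div_log (x := n) (by positivity) hba
    rw [div_pow, le_div_iff₀ (by positivity)] at this
    exact_mod_cast this
  refine hle.lt_of_ne fun heq => ?_
  have : a ∣ b ^ k := heq ▸ (dvd_pow_self a hk.ne').mul_left n
  exact ha.ne' ((hcop.pow_right k).eq_one_of_dvd this)

theorem separates_of_injOn {S : Type*} {p : S → Fin 4} {a b c d : S}
    (hp : Set.InjOn p {a, b, c, d})
    (hab : a ≠ b) (hac : a ≠ c) (had : a ≠ d) (hbc : b ≠ c) (hbd : b ≠ d) (hcd : c ≠ d) :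
    Separates p a b c d := by
  simp only [Separates]
  refine ⟨?_, ?_, ?_, ?_, ?_, ?_⟩ <;> exact hp.ne (by simp) (by simp) ‹_›

/-- If `|S| = r ≥ 5` and `k = ⌈log C(r,4) / log (32/29)⌉`, then there are `k` partitions
of `S` separating every quadruple of distinct elements. -/
theorem exists_separating_partitions {S : Type*} [Fintype S] (r : ℕ) (hr : 5 ≤ r)
    (hcard : Fintype.card S = r)
    (k : ℕ) (hk : k = ⌈Real.log (r.choose 4) / Real.log (32 / 29)⌉₊) :
    ∃ p : Fin k → S → Fin 4,
      ∀ a b c d : S, a ≠ b → a ≠ c → a ≠ d → b ≠ c → b ≠ d → c ≠ d →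
        ∃ i : Fin k, Separates (p i) a b c d := by
  classical
  have hchoose : 1 < r.choose 4 := (Nat.choose_le_choose 4 hr).trans_lt' (by decide)
  have hbound : r.choose 4 * 29 ^ k < 32 ^ k := by
    subst hk
    simpa using mul_pow_lt_pow_natCeil_log_div_log hchoose (a := 29) (b := 32)
      (by norm_num) (by norm_num) (by norm_num)
  obtain ⟨p, hp⟩ := exists_forall_exists_not_of_card_mul_pow_lt (X := S → Fin 4) (κ := Fin k)
    (powersetCard 4 (univ : Finset S)) (fun (T : Finset S) f => ¬ Set.InjOn f T) 29 32
    (fun T hT => (natCard_not_injOn_fin_four (mem_powersetCard_univ.mp hT)).le.trans (by simp))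
    (by simpa [hcard] using hbound)
  refine ⟨p, fun a b c d hab hac had hbc hbd hcd => ?_⟩
  obtain ⟨i, hi⟩ := hp {a, b, c, d} <| mem_powersetCard_univ.mpr <|
    card_eq_four.mpr ⟨a, b, c, d, hab, hac, had, hbc, hbd, hcd, rfl⟩
  exact ⟨i, separates_of_injOn (by simpa using hi) hab hac had hbc hbd hcd⟩
end

section
/- For all natural numbers k, m, n with 1 ≤ k and m ≤ n, the binomial coefficients satisfy n^k · C(m,k) ≤ m^k · C(n,k); moreover the inequality is strict whenever 2 ≤ k ≤ m < n. -/
lemma desc_key_le (k m n : ℕ) (hmn : m ≤ n) :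
    n ^ k * m.descFactorial k ≤ m ^ k * n.descFactorial k := by
  rw [Nat.descFactorial_eq_prod_range, Nat.descFactorial_eq_prod_range,
    show n ^ k = ∏ _i ∈ Finset.range k, n by simp,
    show m ^ k = ∏ _i ∈ Finset.range k, m by simp,
    ← Finset.prod_mul_distrib, ← Finset.prod_mul_distrib]
  apply Finset.prod_le_prod (fun i _ => Nat.zero_le _)
  intro i _
  calc n * (m - i) = n * m - n * i := by rw [Nat.mul_sub]
    _ ≤ m * n - m * i := by
        rw [Nat.mul_comm n m]
        exact Nat.sub_le_sub_left (Nat.mul_le_mul_right i hmn) _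
    _ = m * (n - i) := by rw [Nat.mul_sub]

lemma desc_key_lt (k m n : ℕ) (hk : 2 ≤ k) (hkm : k ≤ m) (hmn : m < n) :
    n ^ k * m.descFactorial k < m ^ k * n.descFactorial k := by
  rw [Nat.descFactorial_eq_prod_range, Nat.descFactorial_eq_prod_range,
    show n ^ k = ∏ _i ∈ Finset.range k, n by simp,
    show m ^ k = ∏ _i ∈ Finset.range k, m by simp,
    ← Finset.prod_mul_distrib, ← Finset.prod_mul_distrib]
  apply Finset.prod_lt_prod
  · intro i hi
    simp only [Finset.mem_range] at hi
    have : i < m := lt_of_lt_of_le hi hkm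
    exact Nat.mul_pos (by omega) (by omega)
  · intro i _
    calc n * (m - i) = n * m - n * i := by rw [Nat.mul_sub]
      _ ≤ m * n - m * i := by
          rw [Nat.mul_comm n m]
          exact Nat.sub_le_sub_left (Nat.mul_le_mul_right i hmn.le) _
      _ = m * (n - i) := by rw [Nat.mul_sub]
  · refine ⟨1, Finset.mem_range.mpr (by omega), ?_⟩
    have h1 : 1 ≤ m := by omega
    calc n * (m - 1) = n * m - n := by rw [Nat.mul_sub, Nat.mul_one]
      _ < m * n - m := by
          rw [Nat.mul_comm n m]
          have hn : n ≤ m * n := Nat.le_mul_of_pos_left n h1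
          omega
      _ = m * (n - 1) := by rw [Nat.mul_sub, Nat.mul_one]

/-- For `1 ≤ k` and `m ≤ n` we have `n^k ⬝ C(m,k) ≤ m^k ⬝ C(n,k)`, with strict inequality
whenever `2 ≤ k ≤ m < n`. -/
theorem pow_mul_choose_le (k m n : ℕ) (hk : 1 ≤ k) (hmn : m ≤ n) :
    n ^ k * m.choose k ≤ m ^ k * n.choose k ∧
      (2 ≤ k → k ≤ m → m < n → n ^ k * m.choose k < m ^ k * n.choose k) := by
  have hfac : 0 < k.factorial := Nat.factorial_pos k
  constructor
  · have := desc_key_le k m n hmn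
    rw [Nat.descFactorial_eq_factorial_mul_choose, Nat.descFactorial_eq_factorial_mul_choose] at this
    have h : n ^ k * m.choose k * k.factorial ≤ m ^ k * n.choose k * k.factorial := by ring_nf; ring_nf at this; linarith
    exact Nat.le_of_mul_le_mul_right h hfac
  · intro h2 hkm hlt
    have := desc_key_lt k m n h2 hkm hlt
    rw [Nat.descFactorial_eq_factorial_mul_choose, Nat.descFactorial_eq_factorial_mul_choose] at this
    have h : n ^ k * m.choose k * k.factorial < m ^ k * n.choose k * k.factorial := by ring_nf; ring_nf at this; linarith
    exact Nat.lt_of_mul_lt_mul_right h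
end

section
/- Let r ≥ 5 be an integer and let k = ⌈ log(C(r,4)) / log(32/29) ⌉. Then C(r,4) · C(29 · 2^{2r−5}, k) < C(4^r, k). (Here 29 · 2^{2r−5} = (29/32) · 4^r is the number of partitions of an r-element set failing to separate a fixed quadruple, so this inequality says that the number of k-element sets of partitions failing to separate some quadruple is strictly less than the total number of k-element sets of partitions.) -/
lemma df_mul_pow_le (k : ℕ) : ∀ m n : ℕ, m ≤ n →
    m.descFactorial k * n ^ k ≤ n.descFactorial k * m ^ k := by
  induction k with
  | zero => simp
  | succ k ih =>
    intro m n h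
    rw [Nat.descFactorial_succ, Nat.descFactorial_succ, pow_succ, pow_succ]
    have h1 : (m - k) * n ≤ (n - k) * m := by
      rw [Nat.sub_mul, Nat.sub_mul, Nat.mul_comm m n]
      exact Nat.sub_le_sub_left (Nat.mul_le_mul_left k h) _
    calc (m - k) * m.descFactorial k * (n ^ k * n)
        = ((m - k) * n) * (m.descFactorial k * n ^ k) := by ring
      _ ≤ ((n - k) * m) * (n.descFactorial k * m ^ k) :=
          Nat.mul_le_mul h1 (ih m n h)
      _ = (n - k) * n.descFactorial k * (m ^ k * m) := by ring

lemma choose_mul_pow_le {m n : ℕ} (k : ℕ) (h : m ≤ n) :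
    m.choose k * n ^ k ≤ n.choose k * m ^ k := by
  have := df_mul_pow_le k m n h
  rw [Nat.descFactorial_eq_factorial_mul_choose, Nat.descFactorial_eq_factorial_mul_choose] at this
  have hfac : 0 < Nat.factorial k := Nat.factorial_pos k
  have h2 : Nat.factorial k * (m.choose k * n ^ k) ≤ Nat.factorial k * (n.choose k * m ^ k) := by
    calc Nat.factorial k * (m.choose k * n ^ k)
        = Nat.factorial k * m.choose k * n ^ k := by ring
      _ ≤ Nat.factorial k * n.choose k * m ^ k := this
      _ = Nat.factorial k * (n.choose k * m ^ k) := by ring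
  exact Nat.le_of_mul_le_mul_left h2 hfac

lemma lin_le_pow : ∀ r : ℕ, 5 ≤ r → 128 * (r - 1) ≤ 3 * 4 ^ r := by
  intro r hr
  induction r, hr using Nat.le_induction with
  | base => norm_num
  | succ n hn ih =>
    have h4 : 4 ^ n ≥ 1 := Nat.one_le_pow _ _ (by norm_num)
    rw [pow_succ]
    omega

/-- For `r ≥ 5` and `k = ⌈log C(r,4) / log (32/29)⌉`, the number of `k`-element sets of
partitions failing to separate some quadruple is strictly less than the total number of
`k`-element sets of partitions: `C(r,4) ⬝ C(29 ⬝ 2^(2r−5), k) < C(4^r, k)`. -/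
theorem choose_bad_lt_choose_total (r : ℕ) (hr : 5 ≤ r)
    (k : ℕ) (hk : k = ⌈Real.log (r.choose 4) / Real.log (32 / 29)⌉₊) :
    r.choose 4 * (29 * 2 ^ (2 * r - 5)).choose k < (4 ^ r).choose k := by
  set C := r.choose 4 with hC
  set t := 2 ^ (2 * r - 5) with ht
  have hN : (4 : ℕ) ^ r = 32 * t := by
    rw [ht, show (4:ℕ) = 2^2 by norm_num, ← pow_mul, show (32:ℕ) = 2^5 by norm_num,
      ← pow_add]
    congr 1; omega
  have hC5 : 5 ≤ C := by
    calc 5 = (5 : ℕ).choose 4 := by decide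
    _ ≤ C := Nat.choose_le_choose 4 hr
  -- positivity of log (32/29)
  have hlog29 : (0:ℝ) < Real.log (32 / 29) := Real.log_pos (by norm_num)
  have hlog3_32 : (3:ℝ)/32 ≤ Real.log (32/29) := by
    have h1 : Real.log (29/32) ≤ 29/32 - 1 := Real.log_le_sub_one_of_pos (by norm_num)
    have h2 : Real.log (32/29) = - Real.log (29/32) := by
      rw [← Real.log_inv]; norm_num
    rw [h2]; linarith
  have hCpos : (0:ℝ) < (C : ℝ) := by exact_mod_cast (by omega : 0 < C)
  have hlogC : 0 < Real.log C := Real.log_pos (by exact_mod_cast (by omega : 1 < C))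
  -- k ≥ 1
  have hk1 : 1 ≤ k := by
    rw [hk]
    exact Nat.one_le_ceil_iff.mpr (div_pos hlogC hlog29)
  -- k ≤ 4^r
  have hkN : k ≤ 4 ^ r := by
    rw [hk, Nat.ceil_le]
    rw [div_le_iff₀ hlog29]
    have hlogr : Real.log C ≤ 4 * (r - 1 : ℝ) := by
      have h1 : Real.log C ≤ Real.log ((r : ℝ) ^ 4) := by
        apply Real.log_le_log hCpos
        exact_mod_cast Nat.choose_le_pow r 4
      have h2 : Real.log ((r:ℝ)^4) = 4 * Real.log r := by
        rw [Real.log_pow]; norm_num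
      have h3 : Real.log r ≤ (r:ℝ) - 1 :=
        Real.log_le_sub_one_of_pos (by exact_mod_cast (by omega : 0 < r))
      rw [h2] at h1; linarith
    have hlin : (128:ℝ) * ((r:ℝ) - 1) ≤ 3 * (4:ℝ) ^ r := by
      have := lin_le_pow r hr
      have hcast : ((128 * (r - 1) : ℕ) : ℝ) ≤ ((3 * 4 ^ r : ℕ) : ℝ) := by exact_mod_cast this
      push_cast at hcast
      rw [Nat.cast_sub (by omega : 1 ≤ r)] at hcast
      push_cast at hcast
      linarith
    have h32 : (3:ℝ)/32 * (4:ℝ)^r ≤ (4:ℝ)^r * Real.log (32/29) := by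
      have hp : (0:ℝ) ≤ (4:ℝ)^r := by positivity
      nlinarith
    calc Real.log C ≤ 4 * ((r:ℝ) - 1) := hlogr
      _ ≤ (3:ℝ)/32 * (4:ℝ)^r := by linarith
      _ ≤ (4:ℝ)^r * Real.log (32/29) := h32
      _ = ((4^r : ℕ) : ℝ) * Real.log (32/29) := by push_cast; ring
  -- key: C * 29^k < 32^k
  have hkey : C * 29 ^ k < 32 ^ k := by
    have hle : (C : ℝ) * 29 ^ k ≤ 32 ^ k := by
      have h1 : Real.log C / Real.log (32/29) ≤ (k : ℝ) := by rw [hk]; exact Nat.le_ceil _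
      have h2 : Real.log C ≤ k * Real.log (32/29) := by
        rw [div_le_iff₀ hlog29] at h1; linarith
      have h3 : (C:ℝ) ≤ (32/29 : ℝ) ^ k := by
        have := Real.exp_le_exp.mpr h2
        rw [Real.exp_log hCpos] at this
        calc (C:ℝ) ≤ Real.exp (k * Real.log (32/29)) := this
          _ = (32/29 : ℝ) ^ k := by
            rw [← Real.log_pow, Real.exp_log (by positivity)]
      have h29 : (0:ℝ) < (29:ℝ)^k := by positivity
      rw [div_pow] at h3
      rw [le_div_iff₀ h29] at h3
      linarith
    have hleN : C * 29 ^ k ≤ 32 ^ k := by exact_mod_cast hle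
    rcases lt_or_eq_of_le hleN with h | h
    · exact h
    · exfalso
      have h29 : (29 : ℕ) ∣ 32 ^ k := by
        rw [← h]
        exact Dvd.dvd.mul_left (dvd_pow_self 29 (by omega)) C
      have := Nat.Prime.dvd_of_dvd_pow (by norm_num : Nat.Prime 29) h29
      omega
  have hNpos : 0 < (4 ^ r).choose k := Nat.choose_pos hkN
  have htpos : 0 < t ^ k := by positivity
  -- choose inequality
  have hmain : (29 * t).choose k * 32 ^ k ≤ (4 ^ r).choose k * 29 ^ k := by
    have h := choose_mul_pow_le (m := 29 * t) (n := 32 * t) k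
      (Nat.mul_le_mul_right t (by norm_num))
    rw [mul_pow, mul_pow] at h
    rw [← hN] at h
    have h' : (29 * t).choose k * 32 ^ k * t ^ k ≤ (4 ^ r).choose k * 29 ^ k * t ^ k := by
      rw [mul_assoc, mul_assoc]; exact h
    exact Nat.le_of_mul_le_mul_right h' htpos
  have h32pos : 0 < 32 ^ k := by positivity
  have final : C * (29 * t).choose k * 32 ^ k < (4 ^ r).choose k * 32 ^ k := by
    nlinarith [Nat.mul_le_mul (le_refl C) hmain, hkey, hNpos, Nat.mul_le_mul (le_refl ((4 ^ r).choose k)) (le_of_lt hkey)]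
  exact Nat.lt_of_mul_lt_mul_right final
end

section
/- In the random orientation model on the complete graph Γ on r vertices with parameter m ≥ 3, let P_2 be the probability that there exist two distinct ascending vertices v_1, v_2 such that no vertex v_3 (distinct from v_1 and v_2) is ascending with both edges (v_1, v_3) and (v_2, v_3) ascending. Then P_2 ≤ C(r,2) · (1/4) · (1 − 1/2^{2m−3})^{r−2}. -/
/-- Sample space of the random orientation model on the complete graph on `r` vertices
with parameter `m`: one fair coin per vertex (`true` = ascending) and `m − 2` fair bits
per edge, all independent and uniform; modelled by the uniform measure on this finite
type. -/
abbrev RandomOrientation (r m : ℕ) : Type :=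
  (Fin r → Bool) × (Sym2 (Fin r) → Fin (m - 2) → Bool)

/-- The vertex `v` is ascending: its coin is heads. -/
def Asc {r m : ℕ} (ω : RandomOrientation r m) (v : Fin r) : Prop := ω.1 v = true

/-- The vertex `v` is descending: its coin is tails. -/
def Desc {r m : ℕ} (ω : RandomOrientation r m) (v : Fin r) : Prop := ω.1 v = false

/-- The edge `(u,v)` is ascending: both endpoints are ascending and all of its
`m − 2` bits are true. -/
def EdgeAsc {r m : ℕ} (ω : RandomOrientation r m) (u v : Fin r) : Prop :=
  Asc ω u ∧ Asc ω v ∧ ∀ i, ω.2 s(u, v) i = true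

/-- The edge `(u,v)` is descending: both endpoints are descending and all of its
`m − 2` bits are false. -/
def EdgeDesc {r m : ℕ} (ω : RandomOrientation r m) (u v : Fin r) : Prop :=
  Desc ω u ∧ Desc ω v ∧ ∀ i, ω.2 s(u, v) i = false

/-- The uniform probability of an event in the random orientation model. -/
noncomputable def pr {r m : ℕ} (E : Set (RandomOrientation r m)) : ℝ :=
  (Nat.card E : ℝ) / (Nat.card (RandomOrientation r m) : ℝ)

namespace RO

open Finset

variable {r m : ℕ}

/-- Per-third-vertex configuration: its coin and the bits on the two connecting edges. -/
abbrev Cfg (m : ℕ) := Bool × (Fin (m-2) → Bool) × (Fin (m-2) → Bool)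

/-- The forbidden configuration: coin heads and all bits on both edges true. -/
def Bad (x : Cfg m) : Prop :=
  x.1 = true ∧ (∀ i, x.2.1 i = true) ∧ (∀ i, x.2.2 i = true)

instance : DecidablePred (Bad (m := m)) := fun x => by
  unfold Bad; infer_instance

lemma card_allowed (m : ℕ) :
    Fintype.card {x : Cfg m // ¬ Bad x} = 2 * (2^(m-2) * 2^(m-2)) - 1 := by
  have h1 : Fintype.card {x : Cfg m // Bad x} = 1 := by
    rw [Fintype.card_eq_one_iff]
    refine ⟨⟨(true, fun _ => true, fun _ => true), by simp [Bad]⟩, ?_⟩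
    rintro ⟨⟨b, f, g⟩, hb, hf, hg⟩
    apply Subtype.ext
    simp only at hb hf hg
    refine Prod.ext ?_ (Prod.ext ?_ ?_) <;> simp_all <;> funext i <;> simp_all
  have h2 : Fintype.card (Cfg m) = 2 * (2^(m-2) * 2^(m-2)) := by
    simp [Fintype.card_fun]
  rw [Fintype.card_subtype_compl, h1, h2]

/-- The bad event for a fixed pair of vertices. -/
def ASet (v₁ v₂ : Fin r) (m : ℕ) : Set (RandomOrientation r m) :=
  {ω | Asc ω v₁ ∧ Asc ω v₂ ∧ ∀ v₃ : Fin r, v₃ ≠ v₁ → v₃ ≠ v₂ →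
      ¬ (Asc ω v₃ ∧ EdgeAsc ω v₁ v₃ ∧ EdgeAsc ω v₂ v₃)}

/-- The edges from `v₁` or `v₂` to a third vertex. -/
def edgeSet (v₁ v₂ : Fin r) : Finset (Sym2 (Fin r)) :=
  ((Finset.univ.filter fun v => v ≠ v₁ ∧ v ≠ v₂).image fun v => s(v₁, v)) ∪
  ((Finset.univ.filter fun v => v ≠ v₁ ∧ v ≠ v₂).image fun v => s(v₂, v))

lemma card_filter_ne (v₁ v₂ : Fin r) (h : v₁ ≠ v₂) :
    (Finset.univ.filter fun v => v ≠ v₁ ∧ v ≠ v₂).card = r - 2 := by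
  have he : (Finset.univ.filter fun v : Fin r => v ≠ v₁ ∧ v ≠ v₂)
      = ({v₁, v₂} : Finset (Fin r))ᶜ := by
    ext v; simp [not_or]
  rw [he, Finset.card_compl, Finset.card_insert_of_notMem (by simp [h]),
    Finset.card_singleton]
  simp

lemma card_edgeSet (v₁ v₂ : Fin r) (h : v₁ ≠ v₂) :
    (edgeSet v₁ v₂).card = 2 * (r - 2) := by
  have hinj1 : Function.Injective (fun v : Fin r => s(v₁, v)) :=
    fun a b hab => Sym2.congr_right.mp hab
  have hinj2 : Function.Injective (fun v : Fin r => s(v₂, v)) :=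
    fun a b hab => Sym2.congr_right.mp hab
  have hdisj : Disjoint
      ((Finset.univ.filter fun v => v ≠ v₁ ∧ v ≠ v₂).image fun v => s(v₁, v))
      ((Finset.univ.filter fun v => v ≠ v₁ ∧ v ≠ v₂).image fun v => s(v₂, v)) := by
    rw [Finset.disjoint_left]
    rintro e he1 he2
    obtain ⟨a, ha, rfl⟩ := Finset.mem_image.mp he1
    obtain ⟨b, hb, hab⟩ := Finset.mem_image.mp he2
    simp only [Finset.mem_filter] at ha hb
    rw [Sym2.eq_iff] at hab
    rcases hab with ⟨h1, _⟩ | ⟨h1, h2⟩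
    · exact h h1.symm
    · exact hb.2.1 h2
  rw [edgeSet, Finset.card_union_of_disjoint hdisj,
    Finset.card_image_of_injective _ hinj1, Finset.card_image_of_injective _ hinj2,
    card_filter_ne v₁ v₂ h, two_mul]

lemma card_ASet_le (v₁ v₂ : Fin r) (h : v₁ ≠ v₂) :
    Nat.card (ASet v₁ v₂ m) ≤
      (2 * (2^(m-2) * 2^(m-2)) - 1)^(r-2) *
        (2^(m-2))^(Fintype.card (Sym2 (Fin r)) - 2*(r-2)) := by
  classical
  have key : ∀ ω : ASet v₁ v₂ m, ∀ v : Fin r, v ≠ v₁ → v ≠ v₂ →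
      ¬ Bad ((ω.1.1 v, ω.1.2 s(v₁, v), ω.1.2 s(v₂, v)) : Cfg m) := by
    rintro ⟨ω, ha1, ha2, hno⟩ v hv1 hv2 ⟨hb, hf, hg⟩
    exact hno v hv1 hv2 ⟨hb, ⟨ha1, hb, hf⟩, ⟨ha2, hb, hg⟩⟩
  let T := ({v : Fin r // v ≠ v₁ ∧ v ≠ v₂} → {x : Cfg m // ¬ Bad x}) ×
           ({e : Sym2 (Fin r) // e ∉ edgeSet v₁ v₂} → Fin (m-2) → Bool)
  let f : ASet v₁ v₂ m → T := fun ω =>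
    (fun v => ⟨(ω.1.1 v.1, ω.1.2 s(v₁, v.1), ω.1.2 s(v₂, v.1)), key ω v.1 v.2.1 v.2.2⟩,
     fun e => ω.1.2 e.1)
  have hinj : Function.Injective f := by
    rintro ⟨ω, hω⟩ ⟨ω', hω'⟩ hff
    have h1 := congrArg Prod.fst hff
    have h2 := congrArg Prod.snd hff
    simp only [f] at h1 h2
    apply Subtype.ext
    have e1 : ω.1 v₁ = true := hω.1
    have e1' : ω'.1 v₁ = true := hω'.1
    have e2 : ω.1 v₂ = true := hω.2.1
    have e2' : ω'.1 v₂ = true := hω'.2.1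
    refine Prod.ext ?_ ?_
    · funext v
      by_cases hv1 : v = v₁
      · subst hv1; rw [e1, e1']
      · by_cases hv2 : v = v₂
        · subst hv2; rw [e2, e2']
        · have := congrArg Subtype.val (congrFun h1 ⟨v, hv1, hv2⟩)
          exact congrArg (fun x : Cfg m => x.1) this
    · funext e i
      by_cases he : e ∈ edgeSet v₁ v₂
      · rw [edgeSet, Finset.mem_union] at he
        rcases he with he | he
        · obtain ⟨v, hv, rfl⟩ := Finset.mem_image.mp he
          simp only [Finset.mem_filter] at hv
          have := congrArg Subtype.val (congrFun h1 ⟨v, hv.2.1, hv.2.2⟩)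
          exact congrFun (congrArg (fun x : Cfg m => x.2.1) this) i
        · obtain ⟨v, hv, rfl⟩ := Finset.mem_image.mp he
          simp only [Finset.mem_filter] at hv
          have := congrArg Subtype.val (congrFun h1 ⟨v, hv.2.1, hv.2.2⟩)
          exact congrFun (congrArg (fun x : Cfg m => x.2.2) this) i
      · exact congrFun (congrFun h2 ⟨e, he⟩) i
  have hS : Fintype.card {v : Fin r // v ≠ v₁ ∧ v ≠ v₂} = r - 2 := by
    rw [Fintype.card_subtype]
    exact card_filter_ne v₁ v₂ h
  have hC : Fintype.card {e : Sym2 (Fin r) // e ∉ edgeSet v₁ v₂}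
      = Fintype.card (Sym2 (Fin r)) - 2*(r-2) := by
    rw [Fintype.card_subtype_compl, Fintype.card_coe, card_edgeSet v₁ v₂ h]
  calc Nat.card (ASet v₁ v₂ m) ≤ Nat.card T := Nat.card_le_card_of_injective f hinj
  _ = _ := by
    rw [Nat.card_eq_fintype_card, Fintype.card_prod, Fintype.card_fun, Fintype.card_fun,
      card_allowed, hS, hC, Fintype.card_fun, Fintype.card_bool, Fintype.card_fin]

lemma card_Omega (r m : ℕ) :
    Nat.card (RandomOrientation r m) =
      2^r * (2^(m-2))^(Fintype.card (Sym2 (Fin r))) := by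
  rw [Nat.card_eq_fintype_card, Fintype.card_prod, Fintype.card_fun, Fintype.card_fun,
    Fintype.card_fun, Fintype.card_bool, Fintype.card_fin, Fintype.card_fin]

lemma pr_ASet_le (v₁ v₂ : Fin r) (h : v₁ ≠ v₂) (hm : 3 ≤ m) (hr : 2 ≤ r) :
    pr (ASet v₁ v₂ m) ≤ (1/4 : ℝ) * (1 - 1/2^(2*m-3))^(r-2) := by
  have hN2 : 2*(r-2) ≤ Fintype.card (Sym2 (Fin r)) := by
    rw [← card_edgeSet v₁ v₂ h]
    simpa using Finset.card_le_univ (edgeSet v₁ v₂)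
  obtain ⟨k, hk⟩ : ∃ k, r = k + 2 := ⟨r - 2, by omega⟩
  obtain ⟨u, hu⟩ : ∃ u, m = u + 3 := ⟨m - 3, by omega⟩
  subst hk hu
  set N := Fintype.card (Sym2 (Fin (k+2))) with hN
  obtain ⟨c, hc⟩ : ∃ c, N = c + 2*k := ⟨N - 2*k, by omega⟩
  have hD : (0:ℝ) < (Nat.card (RandomOrientation (k+2) (u+3)) : ℝ) := by
    have : 0 < Nat.card (RandomOrientation (k+2) (u+3)) := Nat.card_pos
    exact_mod_cast this
  rw [pr, div_le_iff₀ hD]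
  calc (Nat.card (ASet v₁ v₂ (u+3)) : ℝ)
      ≤ ((2 * (2^(u+3-2) * 2^(u+3-2)) - 1)^(k+2-2) *
        (2^(u+3-2))^(N - 2*(k+2-2)) : ℕ) := by
        exact_mod_cast card_ASet_le v₁ v₂ h
  _ = (1/4 : ℝ) * (1 - 1/2^(2*(u+3)-3))^(k+2-2) *
        (Nat.card (RandomOrientation (k+2) (u+3)) : ℝ) := by
      rw [card_Omega, ← hN]
      have hs1 : u + 3 - 2 = u + 1 := by omega
      have hs2 : k + 2 - 2 = k := by omega
      have hs3 : 2*(u+3) - 3 = 2*u + 3 := by omega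
      have hs4 : N - 2*k = c := by omega
      rw [hs1, hs2, hs3, hs4, hc]
      have h1 : (1:ℕ) ≤ 2 * (2^(u+1) * 2^(u+1)) := Nat.one_le_iff_ne_zero.mpr (by positivity)
      push_cast [h1]
      have hpow : (2:ℝ)^(2*u+3) = 2 * ((2:ℝ)^(u+1) * 2^(u+1)) := by ring
      rw [hpow]
      obtain ⟨A, hA, hApos⟩ : ∃ A : ℝ, (2:ℝ)^(u+1) = A ∧ 0 < A := ⟨_, rfl, by positivity⟩
      rw [hA]
      have hBne : (2 * (A*A)) ≠ 0 := by positivity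
      have hAne : A ≠ 0 := ne_of_gt hApos
      have h2k : A^(c+2*k) = A^c * (A*A)^k := by
        rw [pow_add, two_mul k, pow_add, mul_pow]
      rw [h2k]
      have hstep : (1 - 1/(2*(A*A))) = (2*(A*A) - 1)/(2*(A*A)) := by
        field_simp
      rw [hstep, div_pow]
      field_simp
      ring
  _ = _ := by ring

lemma card_ltPairs (r : ℕ) :
    (Finset.univ.filter fun p : Fin r × Fin r => p.1 < p.2).card = r.choose 2 := by
  rw [Finset.card_filter, Fintype.sum_prod_type]
  have hstep : ∀ a : Fin r, (∑ b : Fin r, if a < b then 1 else 0) = r - 1 - a := by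
    intro a
    rw [← Finset.card_filter]
    have he : (Finset.univ.filter fun b : Fin r => a < b) = Finset.Ioi a := by
      ext b; simp
    rw [he, Fin.card_Ioi]
  rw [Finset.sum_congr rfl fun a _ => hstep a]
  rw [Fin.sum_univ_eq_sum_range (fun i => r - 1 - i) r]
  have := Finset.sum_range_reflect (fun i => i) r
  have h2 : ∑ i ∈ Finset.range r, (r - 1 - i) = ∑ i ∈ Finset.range r, i := this
  rw [h2, Finset.sum_range_id, Nat.choose_two_right]

end RO

/-- The probability that some two distinct ascending vertices `v₁, v₂` admit no third
vertex `v₃` that is ascending with both edges `(v₁,v₃)` and `(v₂,v₃)` ascending is at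
most `C(r,2) ⬝ (1/4) ⬝ (1 − 1/2^(2m−3))^(r−2)`. -/
theorem pr_ascending_pair_no_common_neighbor (r m : ℕ) (hr : 1 ≤ r) (hm : 3 ≤ m) :
    pr {ω : RandomOrientation r m |
        ∃ v₁ v₂ : Fin r, v₁ ≠ v₂ ∧ Asc ω v₁ ∧ Asc ω v₂ ∧
          ∀ v₃ : Fin r, v₃ ≠ v₁ → v₃ ≠ v₂ →
            ¬ (Asc ω v₃ ∧ EdgeAsc ω v₁ v₃ ∧ EdgeAsc ω v₂ v₃)}
      ≤ (r.choose 2 : ℝ) * (1 / 4) * (1 - 1 / 2 ^ (2 * m - 3)) ^ (r - 2) := by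
  classical
  set E : Set (RandomOrientation r m) := {ω : RandomOrientation r m |
        ∃ v₁ v₂ : Fin r, v₁ ≠ v₂ ∧ Asc ω v₁ ∧ Asc ω v₂ ∧
          ∀ v₃ : Fin r, v₃ ≠ v₁ → v₃ ≠ v₂ →
            ¬ (Asc ω v₃ ∧ EdgeAsc ω v₁ v₃ ∧ EdgeAsc ω v₂ v₃)} with hE
  set P : Finset (Fin r × Fin r) := Finset.univ.filter (fun p => p.1 < p.2) with hP
  have hPcard : P.card = r.choose 2 := RO.card_ltPairs r
  have hsub : E.toFinset ⊆ P.biUnion (fun p => (RO.ASet p.1 p.2 m).toFinset) := by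
    intro ω hω
    rw [Set.mem_toFinset] at hω
    obtain ⟨v₁, v₂, hne, ha1, ha2, hno⟩ := hω
    rcases hne.lt_or_gt with hlt | hlt
    · refine Finset.mem_biUnion.mpr ⟨(v₁, v₂), by simp [hP, hlt], ?_⟩
      rw [Set.mem_toFinset]
      exact ⟨ha1, ha2, hno⟩
    · refine Finset.mem_biUnion.mpr ⟨(v₂, v₁), by simp [hP, hlt], ?_⟩
      rw [Set.mem_toFinset]
      exact ⟨ha2, ha1, fun v₃ h2 h1 hcon => hno v₃ h1 h2 ⟨hcon.1, hcon.2.2, hcon.2.1⟩⟩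
  have hcardE : Nat.card E ≤ ∑ p ∈ P, Nat.card (RO.ASet p.1 p.2 m) := by
    have h1 : Nat.card E = E.toFinset.card := by
      rw [Nat.card_eq_fintype_card, Set.toFinset_card]
    rw [h1]
    calc E.toFinset.card ≤ (P.biUnion fun p => (RO.ASet p.1 p.2 m).toFinset).card :=
          Finset.card_le_card hsub
    _ ≤ ∑ p ∈ P, ((RO.ASet p.1 p.2 m).toFinset).card := Finset.card_biUnion_le
    _ = ∑ p ∈ P, Nat.card (RO.ASet p.1 p.2 m) := by
        refine Finset.sum_congr rfl fun p _ => ?_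
        rw [Nat.card_eq_fintype_card, Set.toFinset_card]
  have hD : (0:ℝ) < (Nat.card (RandomOrientation r m) : ℝ) := by
    have : 0 < Nat.card (RandomOrientation r m) := Nat.card_pos
    exact_mod_cast this
  have hterm : ∀ p ∈ P, pr (RO.ASet p.1 p.2 m) ≤
      (1/4 : ℝ) * (1 - 1/2^(2*m-3))^(r-2) := by
    intro p hp
    have hlt : p.1 < p.2 := (Finset.mem_filter.mp hp).2
    have hne : p.1 ≠ p.2 := ne_of_lt hlt
    have hr2 : 2 ≤ r := by
      have h1 : (p.1 : ℕ) < (p.2 : ℕ) := hlt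
      have h2 : (p.2 : ℕ) < r := p.2.isLt
      omega
    exact RO.pr_ASet_le p.1 p.2 hne hm hr2
  calc pr E = (Nat.card E : ℝ) / (Nat.card (RandomOrientation r m) : ℝ) := rfl
  _ ≤ (∑ p ∈ P, (Nat.card (RO.ASet p.1 p.2 m) : ℝ)) / (Nat.card (RandomOrientation r m) : ℝ) := by
      gcongr
      exact_mod_cast hcardE
  _ = ∑ p ∈ P, pr (RO.ASet p.1 p.2 m) := by
      simp only [pr, Finset.sum_div]
  _ ≤ ∑ p ∈ P, (1/4 : ℝ) * (1 - 1/2^(2*m-3))^(r-2) := Finset.sum_le_sum hterm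
  _ = (P.card : ℝ) * ((1/4 : ℝ) * (1 - 1/2^(2*m-3))^(r-2)) := by
      rw [Finset.sum_const, nsmul_eq_mul]
  _ = (r.choose 2 : ℝ) * (1 / 4) * (1 - 1 / 2 ^ (2 * m - 3)) ^ (r - 2) := by
      rw [hPcard, mul_assoc]
end

section
/- In the random orientation model on the complete graph Γ on r vertices with parameter m ≥ 3, the probability of the event that [either no vertex is ascending, or some two distinct ascending vertices v_1, v_2 have no vertex v_3 ascending with both edges (v_1,v_3), (v_2,v_3) ascending] or [either no vertex is descending, or some two distinct descending vertices v_1, v_2 have no vertex v_3 descending with both edges (v_1,v_3), (v_2,v_3) descending] is at most 1/2^{r−1} + C(r,2) · (1/2) · (1 − 1/2^{2m−3})^{r−2}. -/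
/-! A failure of colour `t` means that no vertex has colour `t`, or that some pair `{a, b}` of
colour `t` has no third vertex `c` of colour `t` joined to both by edges of colour `t`. The first
event has probability `2⁻ʳ`. For the second, the coins of `a` and `b` and, for each of the `r - 2`
third vertices `c`, the block formed by the coin of `c` and the bits of the edges `ac`, `bc` are
disjoint sets of independent coordinates; a block is monochromatic of colour `t` with probability
`2^-(2m-3)`, so the pair event has probability `¼ (1 - 2^-(2m-3))^(r-2)`. The union bound over
the two colours and the `C(r,2)` pairs gives the claim. -/

noncomputable def uniformProb {α : Type*} (E : Set α) : ℝ := E.ncard / Nat.card α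

section UniformProb

variable {α β : Type*}

theorem uniformProb_mono [Finite α] {E F : Set α} (h : E ⊆ F) :
    uniformProb E ≤ uniformProb F := by
  unfold uniformProb
  gcongr
  exact Set.toFinite F

theorem uniformProb_union_le (E F : Set α) :
    uniformProb (E ∪ F) ≤ uniformProb E + uniformProb F := by
  rw [uniformProb, uniformProb, uniformProb, ← add_div]
  gcongr
  exact_mod_cast Set.ncard_union_le E F

theorem uniformProb_biUnion_le {ι : Type*} (s : Finset ι) (E : ι → Set α) :
    uniformProb (⋃ i ∈ s, E i) ≤ ∑ i ∈ s, uniformProb (E i) := by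
  simp only [uniformProb, ← Finset.sum_div]
  gcongr
  exact_mod_cast s.set_ncard_biUnion_le E

theorem uniformProb_preimage_equiv (e : α ≃ β) (X : Set β) :
    uniformProb (e ⁻¹' X) = uniformProb X := by
  rw [uniformProb, uniformProb, ← e.image_symm_eq_preimage,
    Set.ncard_image_of_injective _ e.symm.injective, Nat.card_congr e]

theorem uniformProb_prod (X : Set α) (Y : Set β) :
    uniformProb (X ×ˢ Y) = uniformProb X * uniformProb Y := by
  simp only [uniformProb, Set.ncard_prod, Nat.card_prod]
  push_cast
  exact mul_div_mul_comm _ _ _ _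

theorem uniformProb_pi {ι : Type*} [Fintype ι] {β : ι → Type*} (A : ∀ i, Set (β i)) :
    uniformProb (Set.univ.pi A) = ∏ i, uniformProb (A i) := by
  simp only [uniformProb, ← Nat.card_coe_set_eq, Nat.card_congr (Equiv.Set.univPi A), Nat.card_pi]
  push_cast
  rw [Finset.prod_div_distrib]

theorem uniformProb_univ [Finite α] [Nonempty α] : uniformProb (Set.univ : Set α) = 1 := by
  rw [uniformProb, Set.ncard_univ, div_self (by exact_mod_cast Nat.card_pos.ne')]

theorem uniformProb_singleton (a : α) : uniformProb {a} = 1 / Nat.card α := by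
  rw [uniformProb, Set.ncard_singleton, Nat.cast_one]

theorem uniformProb_compl [Finite α] [Nonempty α] (A : Set α) :
    uniformProb Aᶜ = 1 - uniformProb A := by
  have hcard := Set.ncard_add_ncard_compl A
  have hpos : (0 : ℝ) < Nat.card α := by exact_mod_cast Nat.card_pos
  rw [uniformProb, uniformProb, eq_sub_iff_add_eq, ← add_div, div_eq_one_iff_eq hpos.ne']
  exact_mod_cast (add_comm _ _).trans hcard

end UniformProb

theorem pr_eq_uniformProb {r m : ℕ} (E : Set (RandomOrientation r m)) : pr E = uniformProb E := by
  rw [pr, Nat.card_coe_set_eq, uniformProb]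

open Classical in
noncomputable def Equiv.funSplitOfInjective {κ ι β : Type*} (g : κ → ι)
    (hg : Function.Injective g) : (ι → β) ≃ (κ → β) × ({i // i ∉ Set.range g} → β) :=
  (Equiv.piEquivPiSubtypeProd (· ∈ Set.range g) fun _ => β).trans
    (Equiv.prodCongr ((Equiv.ofInjective g hg).arrowCongr (Equiv.refl β)).symm (Equiv.refl _))

abbrev EdgeBits (m : ℕ) : Type := Fin (m - 2) → Bool

abbrev Block (m : ℕ) : Type := Bool × EdgeBits m × EdgeBits m

section Pair

variable {r m : ℕ}

abbrev ThirdVertex (a b : Fin r) : Type := {c : Fin r // ¬(c = a ∨ c = b)}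

def spokes (a b : Fin r) : ThirdVertex a b ⊕ ThirdVertex a b → Sym2 (Fin r) :=
  Sum.elim (fun c => s(a, c.1)) (fun c => s(b, c.1))

def noCommonNeighbor (t : Bool) (a b : Fin r) : Set (RandomOrientation r m) :=
  {ω | ω.1 a = t ∧ ω.1 b = t ∧ ∀ c, c ≠ a → c ≠ b →
    ¬ (ω.1 c = t ∧ (∀ i, ω.2 s(a, c) i = t) ∧ ∀ i, ω.2 s(b, c) i = t)}

theorem noCommonNeighbor_comm (t : Bool) (a b : Fin r) :
    noCommonNeighbor (m := m) t a b = noCommonNeighbor t b a := by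
  ext ω
  simp only [noCommonNeighbor, Set.mem_ofPred_eq]
  grind

variable {a b : Fin r}

theorem spokes_injective (hab : a ≠ b) : Function.Injective (spokes a b) := by
  rintro (⟨c, hc⟩ | ⟨c, hc⟩) (⟨d, hd⟩ | ⟨d, hd⟩) h <;> simp [spokes] at h <;> grind

theorem card_subtype_eq_or_eq (hab : a ≠ b) : Fintype.card {c : Fin r // c = a ∨ c = b} = 2 := by
  rw [Fintype.card_subtype]
  simp [Finset.filter_or, Finset.filter_eq', Finset.card_pair hab]

theorem card_thirdVertex (hab : a ≠ b) : Fintype.card (ThirdVertex a b) = r - 2 := by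
  rw [Fintype.card_subtype_compl, card_subtype_eq_or_eq hab, Fintype.card_fin]

noncomputable def pairSplit (hab : a ≠ b) :
    RandomOrientation r m ≃
      ({c : Fin r // c = a ∨ c = b} → Bool) ×
        ((ThirdVertex a b → Block m) × ({e // e ∉ Set.range (spokes a b)} → EdgeBits m)) :=
  (Equiv.prodCongr (Equiv.piEquivPiSubtypeProd (fun c => c = a ∨ c = b) fun _ => Bool)
      (Equiv.funSplitOfInjective _ (spokes_injective hab))).trans <|
    (Equiv.prodAssoc _ _ _).trans <| Equiv.prodCongr (Equiv.refl _) <|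
      (Equiv.prodAssoc _ _ _).symm.trans <| Equiv.prodCongr
        ((Equiv.prodCongr (Equiv.refl _) ((Equiv.sumArrowEquivProdArrow _ _ _).trans
            (Equiv.arrowProdEquivProdArrow _ _ _).symm)).trans
          (Equiv.arrowProdEquivProdArrow _ _ _).symm)
        (Equiv.refl _)

theorem pairSplit_apply_fst (hab : a ≠ b) (ω : RandomOrientation r m)
    (c : {c : Fin r // c = a ∨ c = b}) : (pairSplit hab ω).1 c = ω.1 c :=
  rfl

theorem pairSplit_apply_snd_fst (hab : a ≠ b) (ω : RandomOrientation r m) (c : ThirdVertex a b) :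
    (pairSplit hab ω).2.1 c = (ω.1 c, ω.2 s(a, c.1), ω.2 s(b, c.1)) :=
  rfl

theorem noCommonNeighbor_eq_preimage_pairSplit (t : Bool) (hab : a ≠ b) :
    noCommonNeighbor (m := m) t a b =
      pairSplit hab ⁻¹' (Set.univ.pi (fun _ => {t}) ×ˢ
        (Set.univ.pi (fun _ => {(t, fun _ => t, fun _ => t)}ᶜ) ×ˢ Set.univ)) := by
  ext ω
  simp [noCommonNeighbor, pairSplit_apply_fst, pairSplit_apply_snd_fst, funext_iff, and_assoc]

theorem uniformProb_noCommonNeighbor (t : Bool) (hab : a ≠ b) :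
    uniformProb (noCommonNeighbor (m := m) t a b) =
      (1 / 2) ^ 2 * (1 - 1 / 2 ^ (2 * (m - 2) + 1)) ^ (r - 2) := by
  rw [noCommonNeighbor_eq_preimage_pairSplit t hab, uniformProb_preimage_equiv,
    uniformProb_prod, uniformProb_prod, uniformProb_pi, uniformProb_pi, uniformProb_univ,
    uniformProb_compl, uniformProb_singleton, uniformProb_singleton]
  simp [Finset.prod_const, card_subtype_eq_or_eq hab, card_thirdVertex hab]
  ring

end Pair

section Color

variable {r m : ℕ}

theorem uniformProb_forall_ne (t : Bool) :
    uniformProb {ω : RandomOrientation r m | ∀ v, ω.1 v ≠ t} = (1 / 2) ^ r := by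
  have h : {ω : RandomOrientation r m | ∀ v, ω.1 v ≠ t} =
      Set.univ.pi (fun _ => {t}ᶜ) ×ˢ Set.univ := by
    ext ω
    simp [Bool.eq_not_iff]
  rw [h, uniformProb_prod, uniformProb_pi, uniformProb_univ]
  simp [uniformProb_singleton]

def colorFailure (t : Bool) : Set (RandomOrientation r m) :=
  {ω | (∀ v, ω.1 v ≠ t) ∨ ∃ a b, a ≠ b ∧ ω ∈ noCommonNeighbor t a b}

theorem uniformProb_colorFailure_le (t : Bool) :
    uniformProb (colorFailure (r := r) (m := m) t) ≤
      (1 / 2) ^ r + r.choose 2 * ((1 / 2) ^ 2 * (1 - 1 / 2 ^ (2 * (m - 2) + 1)) ^ (r - 2)) := by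
  let pairs : Finset (Sym2 (Fin r)) := {z | ¬ z.IsDiag}
  let pairEvent : Sym2 (Fin r) → Set (RandomOrientation r m) :=
    Sym2.lift ⟨noCommonNeighbor t, noCommonNeighbor_comm t⟩
  have hcover : colorFailure t ⊆ {ω | ∀ v, ω.1 v ≠ t} ∪ ⋃ z ∈ pairs, pairEvent z := by
    rintro ω (h | ⟨a, b, hab, h⟩)
    · exact Or.inl h
    · refine Or.inr (Set.mem_biUnion (x := s(a, b)) ?_ ?_)
      · simpa [pairs] using hab
      · simpa only [pairEvent, Sym2.lift_mk] using h
  have hpair (z) (hz : z ∈ pairs) : uniformProb (pairEvent z) =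
      (1 / 2) ^ 2 * (1 - 1 / 2 ^ (2 * (m - 2) + 1)) ^ (r - 2) := by
    induction z using Sym2.inductionOn with
    | hf a b =>
      simp only [pairEvent, Sym2.lift_mk]
      exact uniformProb_noCommonNeighbor t (by simpa [pairs] using hz)
  have hcard : pairs.card = r.choose 2 := by
    rw [← Fintype.card_subtype, Sym2.card_subtype_not_diag, Fintype.card_fin]
  calc uniformProb (colorFailure t)
      ≤ uniformProb ({ω : RandomOrientation r m | ∀ v, ω.1 v ≠ t} ∪ ⋃ z ∈ pairs, pairEvent z) :=
        uniformProb_mono hcover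
    _ ≤ uniformProb {ω : RandomOrientation r m | ∀ v, ω.1 v ≠ t} +
          ∑ z ∈ pairs, uniformProb (pairEvent z) :=
        (uniformProb_union_le _ _).trans (by gcongr; exact uniformProb_biUnion_le _ _)
    _ = _ := by
      rw [uniformProb_forall_ne, Finset.sum_congr rfl hpair, Finset.sum_const, hcard,
        nsmul_eq_mul]

end Color

/-- The probability that the ascending subgraph or the descending subgraph fails to be
nonempty with every two vertices joined through a common neighbor is at most
`1/2^(r−1) + C(r,2) ⬝ (1/2) ⬝ (1 − 1/2^(2m−3))^(r−2)`. -/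
theorem pr_ascending_or_descending_fails (r m : ℕ) (hr : 1 ≤ r) (hm : 3 ≤ m) :
    pr {ω : RandomOrientation r m |
        ((∀ v : Fin r, ¬ Asc ω v) ∨
          ∃ v₁ v₂ : Fin r, v₁ ≠ v₂ ∧ Asc ω v₁ ∧ Asc ω v₂ ∧
            ∀ v₃ : Fin r, v₃ ≠ v₁ → v₃ ≠ v₂ →
              ¬ (Asc ω v₃ ∧ EdgeAsc ω v₁ v₃ ∧ EdgeAsc ω v₂ v₃)) ∨
        ((∀ v : Fin r, ¬ Desc ω v) ∨
          ∃ v₁ v₂ : Fin r, v₁ ≠ v₂ ∧ Desc ω v₁ ∧ Desc ω v₂ ∧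
            ∀ v₃ : Fin r, v₃ ≠ v₁ → v₃ ≠ v₂ →
              ¬ (Desc ω v₃ ∧ EdgeDesc ω v₁ v₃ ∧ EdgeDesc ω v₂ v₃))}
      ≤ 1 / 2 ^ (r - 1)
          + (r.choose 2 : ℝ) * (1 / 2) * (1 - 1 / 2 ^ (2 * m - 3)) ^ (r - 2) := by
  rw [pr_eq_uniformProb]
  refine (uniformProb_mono (F := colorFailure true ∪ colorFailure false) ?_).trans ?_
  · rintro ω ((h | ⟨a, b, hab, ha, hb, h⟩) | (h | ⟨a, b, hab, ha, hb, h⟩))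
    · exact Or.inl (Or.inl h)
    · exact Or.inl (Or.inr ⟨a, b, hab, ha, hb, fun c hca hcb ⟨hc, hac, hbc⟩ =>
        h c hca hcb ⟨hc, ⟨ha, hc, hac⟩, hb, hc, hbc⟩⟩)
    · exact Or.inr (Or.inl h)
    · exact Or.inr (Or.inr ⟨a, b, hab, ha, hb, fun c hca hcb ⟨hc, hac, hbc⟩ =>
        h c hca hcb ⟨hc, ⟨ha, hc, hac⟩, hb, hc, hbc⟩⟩)
  have hexp : 2 * m - 3 = 2 * (m - 2) + 1 := by omega
  have hhalf : (1 : ℝ) / 2 ^ (r - 1) = 2 * (1 / 2) ^ r := by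
    obtain ⟨k, rfl⟩ := Nat.exists_eq_add_of_le' hr
    rw [Nat.add_sub_cancel, one_div_pow, pow_succ]
    field_simp
  calc uniformProb (colorFailure true ∪ colorFailure false)
      ≤ uniformProb (colorFailure true) + uniformProb (colorFailure false) :=
        uniformProb_union_le _ _
    _ ≤ 2 * ((1 / 2) ^ r + r.choose 2 *
          ((1 / 2) ^ 2 * (1 - 1 / 2 ^ (2 * (m - 2) + 1)) ^ (r - 2))) := by
      linarith [uniformProb_colorFailure_le (r := r) (m := m) true,
        uniformProb_colorFailure_le (r := r) (m := m) false]
    _ = _ := by rw [hhalf, hexp]; ring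
end
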